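/- For every y ∈ ℝ, −(√2/√π) ∫_{−∞}^∞ e^{−2(x−y)²} (erf(x) − erf(√2 y)) dx = erf(√2 y) − erf(√(2/3) y). -/

import Mathlib

open MeasureTheory Real Filter

/-!
Put `Φ_b(y) = ∫ exp (-b x²) erf (x + y) dx` for `b > 0`. Differentiating under the integral sign
replaces `erf` by its derivative, and completing the square in `exp (-b x²) exp (-(x + y)²)` gives
`Φ_b'(y) = 2 / √(1 + b) · exp (-b y² / (1 + b))`, which is also the derivative of
`√(π / b) · erf (√(b / (1 + b)) y)`. Both functions vanish at `0` (`Φ_b(0)` because `erf` is odd),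
so they coincide. The theorem is the case `b = 2`, together with `∫ exp (-2 (x - y)²) dx = √(π / 2)`.
-/

noncomputable def erf (x : ℝ) : ℝ := (2 / Real.sqrt Real.pi) * ∫ t in (0 : ℝ)..x, Real.exp (-t ^ 2)

lemma erf_zero : erf 0 = 0 := by
  simp [erf]

lemma erf_neg (x : ℝ) : erf (-x) = -erf x := by
  have h := intervalIntegral.integral_comp_neg (a := 0) (b := x) fun t => exp (-t ^ 2)
  simp only [neg_sq, neg_zero] at h
  rw [erf, erf, h, intervalIntegral.integral_symm, mul_neg]

lemma hasDerivAt_erf (x : ℝ) : HasDerivAt erf (2 / √π * exp (-x ^ 2)) x :=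
  ((continuous_exp.comp (continuous_pow 2).neg).integral_hasStrictDerivAt 0 x).hasDerivAt.const_mul _

lemma continuous_erf : Continuous erf :=
  continuous_iff_continuousAt.2 fun _ => (hasDerivAt_erf _).continuousAt

lemma abs_erf_le_one (x : ℝ) : |erf x| ≤ 1 := by
  wlog hx : 0 ≤ x generalizing x
  · simpa [erf_neg] using this (-x) (by linarith)
  have hnonneg : 0 ≤ ∫ t in (0 : ℝ)..x, exp (-t ^ 2) :=
    intervalIntegral.integral_nonneg hx fun t _ => (exp_pos _).le
  have hle : ∫ t in (0 : ℝ)..x, exp (-t ^ 2) ≤ √π / 2 := by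
    have h := integral_gaussian_Ioi 1
    simp only [neg_mul, one_mul, div_one] at h
    rw [intervalIntegral.integral_of_le hx, ← h]
    have hint : Integrable fun t : ℝ => exp (-t ^ 2) := by
      simpa using integrable_exp_neg_mul_sq one_pos
    exact setIntegral_mono_set hint.integrableOn
      (Eventually.of_forall fun t => (exp_pos _).le) Set.Ioc_subset_Ioi_self.eventuallyLE
  have hπ : 0 < √π := sqrt_pos.2 pi_pos
  rw [erf, abs_of_nonneg (by positivity), div_mul_eq_mul_div, div_le_one hπ]
  linarith

lemma MeasureTheory.Integrable.mul_erf_comp {α : Type*} [MeasurableSpace α] {μ : Measure α}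
    {f g : α → ℝ} (hf : Integrable f μ) (hg : Measurable g) :
    Integrable (fun x => f x * erf (g x)) μ :=
  hf.mul_bdd (continuous_erf.measurable.comp hg).aestronglyMeasurable
    (ae_of_all _ fun _ => abs_erf_le_one _)

lemma integral_exp_neg_mul_sq_mul_exp_neg_add_sq {b : ℝ} (hb : 1 + b ≠ 0) (y : ℝ) :
    ∫ x, exp (-b * x ^ 2) * exp (-(x + y) ^ 2) = √(π / (1 + b)) * exp (-(b / (1 + b)) * y ^ 2) := by
  -- completing the square
  have hsq (x : ℝ) : exp (-b * x ^ 2) * exp (-(x + y) ^ 2)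
      = exp (-(b / (1 + b)) * y ^ 2) * exp (-(1 + b) * (x + y / (1 + b)) ^ 2) := by
    rw [← exp_add, ← exp_add]
    congr 1
    field_simp
    ring
  simp_rw [hsq]
  rw [integral_const_mul, integral_add_right_eq_self (fun x => exp (-(1 + b) * x ^ 2)),
    integral_gaussian, mul_comm]

section

variable {b : ℝ}

lemma hasDerivAt_integral_exp_neg_mul_sq_mul_erf_add (hb : 0 < b) (y : ℝ) :
    HasDerivAt (fun y => ∫ x, exp (-b * x ^ 2) * erf (x + y))
      (2 / √(1 + b) * exp (-(b / (1 + b)) * y ^ 2)) y := by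
  have hF' : ∫ x, exp (-b * x ^ 2) * (2 / √π * exp (-(x + y) ^ 2))
      = 2 / √(1 + b) * exp (-(b / (1 + b)) * y ^ 2) := by
    simp_rw [mul_left_comm (exp _), integral_const_mul,
      integral_exp_neg_mul_sq_mul_exp_neg_add_sq (by linarith : 1 + b ≠ 0),
      sqrt_div' π (by linarith : 0 ≤ 1 + b)]
    field_simp
  rw [← hF']
  refine (hasDerivAt_integral_of_dominated_loc_of_deriv_le (x₀ := y) Filter.univ_mem
    (Eventually.of_forall fun y =>
      ((integrable_exp_neg_mul_sq hb).mul_erf_comp (measurable_add_const y)).aestronglyMeasurable)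
    ((integrable_exp_neg_mul_sq hb).mul_erf_comp (measurable_add_const y))
    (F' := fun y x => exp (-b * x ^ 2) * (2 / √π * exp (-(x + y) ^ 2)))
    (bound := fun x => exp (-b * x ^ 2) * (2 / √π))
    (by fun_prop) ?_ ((integrable_exp_neg_mul_sq hb).mul_const _) ?_).2
  · refine Eventually.of_forall fun x y _ => ?_
    rw [norm_mul, norm_mul, norm_of_nonneg (exp_pos _).le, norm_of_nonneg (by positivity),
      norm_of_nonneg (exp_pos _).le]
    exact mul_le_mul_of_nonneg_left (mul_le_of_le_one_right (by positivity)
      (exp_le_one_iff.2 (neg_nonpos.2 (sq_nonneg _)))) (exp_pos _).le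
  · refine Eventually.of_forall fun x y _ => ?_
    exact (((hasDerivAt_erf (x + y)).comp y ((hasDerivAt_id y).const_add x)).const_mul _).congr_deriv
      (by simp)

lemma integral_exp_neg_mul_sq_mul_erf_eq_zero (b : ℝ) : ∫ x, exp (-b * x ^ 2) * erf x = 0 := by
  have h := integral_neg_eq_self (fun x => exp (-b * x ^ 2) * erf x) volume
  simp only [neg_sq, erf_neg, mul_neg, integral_neg] at h
  linarith

lemma hasDerivAt_sqrt_mul_erf_sqrt_mul (hb : 0 < b) (y : ℝ) :
    HasDerivAt (fun y => √(π / b) * erf (√(b / (1 + b)) * y))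
      (2 / √(1 + b) * exp (-(b / (1 + b)) * y ^ 2)) y := by
  refine (((hasDerivAt_erf _).comp y ((hasDerivAt_id y).const_mul _)).const_mul _).congr_deriv ?_
  rw [mul_pow, sq_sqrt (by positivity), sqrt_div' π hb.le, sqrt_div' b (by linarith : 0 ≤ 1 + b)]
  have : 0 < √π := sqrt_pos.2 pi_pos
  have : 0 < √b := sqrt_pos.2 hb
  field_simp
  simp

theorem integral_exp_neg_mul_sq_mul_erf_add (hb : 0 < b) (y : ℝ) :
    ∫ x, exp (-b * x ^ 2) * erf (x + y) = √(π / b) * erf (√(b / (1 + b)) * y) := by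
  refine congrFun (eq_of_fderiv_eq (𝕜 := ℝ) (f := fun y => ∫ x, exp (-b * x ^ 2) * erf (x + y))
    (fun y => (hasDerivAt_integral_exp_neg_mul_sq_mul_erf_add hb y).differentiableAt)
    (fun y => (hasDerivAt_sqrt_mul_erf_sqrt_mul hb y).differentiableAt) (fun y => ?_) 0 ?_) y
  · rw [(hasDerivAt_integral_exp_neg_mul_sq_mul_erf_add hb y).hasFDerivAt.fderiv,
      (hasDerivAt_sqrt_mul_erf_sqrt_mul hb y).hasFDerivAt.fderiv]
  · simp only [add_zero, mul_zero, erf_zero]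
    exact integral_exp_neg_mul_sq_mul_erf_eq_zero b

theorem integral_exp_neg_mul_sub_sq_mul_erf (hb : 0 < b) (y : ℝ) :
    ∫ x, exp (-b * (x - y) ^ 2) * erf x = √(π / b) * erf (√(b / (1 + b)) * y) := by
  rw [← integral_exp_neg_mul_sq_mul_erf_add hb,
    ← integral_add_right_eq_self (fun x => exp (-b * (x - y) ^ 2) * erf x) y]
  simp

end

/-- Gaussian convolution identity for the error function. -/
theorem gaussian_erf_convolution (y : ℝ) :
    -(Real.sqrt 2 / Real.sqrt Real.pi) *
        ∫ x : ℝ, Real.exp (-2 * (x - y) ^ 2) * (erf x - erf (Real.sqrt 2 * y))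
      = erf (Real.sqrt 2 * y) - erf (Real.sqrt (2 / 3) * y) := by
  have hgauss : Integrable fun x => exp (-2 * (x - y) ^ 2) :=
    (integrable_exp_neg_mul_sq two_pos).comp_sub_right y
  have hgauss_erf : Integrable fun x => exp (-2 * (x - y) ^ 2) * erf x :=
    hgauss.mul_erf_comp measurable_id
  simp_rw [mul_sub]
  rw [integral_sub hgauss_erf (hgauss.mul_const _), integral_mul_const,
    integral_sub_right_eq_self (fun x => exp (-2 * x ^ 2)), integral_gaussian,
    integral_exp_neg_mul_sub_sq_mul_erf two_pos, sqrt_div' π zero_le_two]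
  have hπ : 0 < √π := sqrt_pos.2 pi_pos
  norm_num
  field_simp
  ring
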